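/- For the rotational displacement θ × ζ, the shear strain satisfies 2 ε^S(θ × ζ)·t = Q((t·∇)θ × ζ) − θ × t on Σ, where Q = I − t ⊗ t, using (t·∇)ζ = 0 and (n·∇)ζ = n for n ⊥ t. -/
import Mathlib
open Matrix

noncomputable def crossCLM : (Fin 3 → ℝ) →L[ℝ] (Fin 3 → ℝ) →L[ℝ] (Fin 3 → ℝ) :=
  LinearMap.toContinuousLinearMap
    ((LinearMap.toContinuousLinearMap.toLinearMap).comp crossProduct)

@[simp] lemma crossCLM_apply (u w : Fin 3 → ℝ) : crossCLM u w = crossProduct u w := by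
  simp [crossCLM]

lemma fderiv_cross (θf ζ : (Fin 3 → ℝ) → (Fin 3 → ℝ)) (x : Fin 3 → ℝ)
    (hθ : DifferentiableAt ℝ θf x) (hζ : DifferentiableAt ℝ ζ x) (w : Fin 3 → ℝ) :
    fderiv ℝ (fun y => crossProduct (θf y) (ζ y)) x w =
      crossProduct (fderiv ℝ θf x w) (ζ x) + crossProduct (θf x) (fderiv ℝ ζ x w) := by
  have h := (crossCLM.hasFDerivAt_of_bilinear hθ.hasFDerivAt hζ.hasFDerivAt).fderiv
  have heq : fderiv ℝ (fun y => crossProduct (θf y) (ζ y)) x =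
      fderiv ℝ (fun y => crossCLM (θf y) (ζ y)) x := by
    simp only [crossCLM_apply]
  rw [heq, h]
  simp [add_comm]

/-- For the rotational displacement `θ × ζ`, the shear strain satisfies
`2 ε^S(θ × ζ)·t = Q((t·∇)θ × ζ) - θ × t` on `Σ`, where `Q = I - t ⊗ t`, using
`(t·∇)ζ = 0` and `(n·∇)ζ = n` for `n ⊥ t`; here `ε` is the symmetric gradient,
`ε^S = QεP + PεQ` and `P = t ⊗ t`. -/
theorem statement13
    (x t : Fin 3 → ℝ) (ht : t ⬝ᵥ t = 1)
    (θf ζ v : (Fin 3 → ℝ) → (Fin 3 → ℝ))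
    (hθ : DifferentiableAt ℝ θf x)
    (hζdiff : DifferentiableAt ℝ ζ x)
    (hθn : ∀ nrm : Fin 3 → ℝ, nrm ⬝ᵥ t = 0 → fderiv ℝ θf x nrm = 0)
    (hζt : fderiv ℝ ζ x t = 0)
    (hζn : ∀ nrm : Fin 3 → ℝ, nrm ⬝ᵥ t = 0 → fderiv ℝ ζ x nrm = nrm)
    (hv : v = fun y => crossProduct (θf y) (ζ y)) :
    let J : Matrix (Fin 3) (Fin 3) ℝ := Matrix.of fun i j => fderiv ℝ v x (Pi.single i 1) j
    let ε : Matrix (Fin 3) (Fin 3) ℝ := (1 / 2 : ℝ) • (J + Jᵀ)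
    let P : Matrix (Fin 3) (Fin 3) ℝ := vecMulVec t t
    let Q : Matrix (Fin 3) (Fin 3) ℝ := 1 - P
    (2 : ℝ) • ((Q * ε * P + P * ε * Q) *ᵥ t) =
      Q *ᵥ crossProduct (fderiv ℝ θf x t) (ζ x) - crossProduct (θf x) t := by
  intro J ε P Q
  have ht' : t 0 * t 0 + t 1 * t 1 + t 2 * t 2 = 1 := by
    simpa [dotProduct, Fin.sum_univ_three] using ht
  set a : Fin 3 → ℝ := crossProduct (fderiv ℝ θf x t) (ζ x) with ha
  set θ0 : Fin 3 → ℝ := θf x with hθ0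
  -- derivative formula
  have hfd : ∀ w : Fin 3 → ℝ, fderiv ℝ v x w =
      (w ⬝ᵥ t) • a + crossProduct θ0 (w - (w ⬝ᵥ t) • t) := by
    intro w
    have hw : w = (w ⬝ᵥ t) • t + (w - (w ⬝ᵥ t) • t) := by abel
    have hn : (w - (w ⬝ᵥ t) • t) ⬝ᵥ t = 0 := by
      simp [sub_dotProduct, smul_dotProduct, ht]
    have hθw : fderiv ℝ θf x w = (w ⬝ᵥ t) • fderiv ℝ θf x t := by
      conv_lhs => rw [hw]
      rw [map_add, ContinuousLinearMap.map_smul, hθn _ hn]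
      simp
    have hζw : fderiv ℝ ζ x w = w - (w ⬝ᵥ t) • t := by
      conv_lhs => rw [hw]
      rw [map_add, ContinuousLinearMap.map_smul, hζt, hζn _ hn]
      simp
    rw [hv, fderiv_cross θf ζ x hθ hζdiff w, hθw, hζw]
    have hsm : crossProduct ((w ⬝ᵥ t) • fderiv ℝ θf x t) (ζ x) = (w ⬝ᵥ t) • a := by
      rw [ha, _root_.map_smul, LinearMap.smul_apply]
    rw [hsm, ← hθ0]
  have hJ : ∀ i j, J i j = t i * a j + crossProduct θ0 (Pi.single i 1 - t i • t) j := by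
    intro i j
    have := hfd (Pi.single i 1)
    simp only [J, Matrix.of_apply]
    rw [this]
    simp [single_dotProduct]
  -- P t = t, Q t = 0
  have hPt : P *ᵥ t = t := by
    ext i
    simp only [P, mulVec, dotProduct, vecMulVec_apply, Fin.sum_univ_three]
    linear_combination (t i) * ht'
  have hQt : Q *ᵥ t = 0 := by
    simp [Q, Matrix.sub_mulVec, hPt]
  have hQw : ∀ w : Fin 3 → ℝ, Q *ᵥ w = w - (t ⬝ᵥ w) • t := by
    intro w
    rw [show Q = 1 - P from rfl, Matrix.sub_mulVec, Matrix.one_mulVec]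
    ext i
    simp only [P, Pi.sub_apply, mulVec, dotProduct, vecMulVec_apply, Fin.sum_univ_three,
      Pi.smul_apply, smul_eq_mul]
    ring
  have hK : (J + Jᵀ) *ᵥ t = a + (a ⬝ᵥ t) • t + crossProduct t θ0 := by
    ext i
    simp only [mulVec, dotProduct, Matrix.add_apply, Matrix.transpose_apply, Fin.sum_univ_three,
      hJ, Pi.add_apply, Pi.smul_apply, smul_eq_mul]
    fin_cases i
    · simp [cross_apply, Pi.single_apply, Pi.sub_apply, Pi.smul_apply]
      linear_combination (a 0 - (θ0 1 * t 2 - θ0 2 * t 1)) * ht'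
    · simp [cross_apply, Pi.single_apply, Pi.sub_apply, Pi.smul_apply]
      linear_combination (a 1 - (θ0 2 * t 0 - θ0 0 * t 2)) * ht'
    · simp [cross_apply, Pi.single_apply, Pi.sub_apply, Pi.smul_apply]
      linear_combination (a 2 - (θ0 0 * t 1 - θ0 1 * t 0)) * ht'
  have h1 : (Q * ε * P) *ᵥ t = Q *ᵥ (ε *ᵥ t) := by
    rw [← Matrix.mulVec_mulVec, ← Matrix.mulVec_mulVec, hPt]
  have h2 : (P * ε * Q) *ᵥ t = 0 := by
    rw [← Matrix.mulVec_mulVec, ← Matrix.mulVec_mulVec, hQt, Matrix.mulVec_zero,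
      Matrix.mulVec_zero]
  have h3 : (2 : ℝ) • (ε *ᵥ t) = (J + Jᵀ) *ᵥ t := by
    rw [show ε = (1 / 2 : ℝ) • (J + Jᵀ) from rfl, Matrix.smul_mulVec, smul_smul]
    norm_num
  rw [Matrix.add_mulVec, h1, h2, add_zero, ← Matrix.mulVec_smul, h3, hK,
    Matrix.mulVec_add, Matrix.mulVec_add, Matrix.mulVec_smul, hQt, smul_zero, add_zero,
    hQw (crossProduct t θ0), dot_self_cross, zero_smul, sub_zero, sub_eq_add_neg,
    cross_anticomm]
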